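/- Let c > 0 be fixed, let q = q(n) ≥ c·n, and let k = k(n) be a sequence of positive integers with k = o(n^{1/12}). Then with probability tending to 1 as n → ∞, a random n×n puzzle with q jig types satisfies: either all feasible complete assemblies are similar, or there exist at least two non-similar feasible complete assemblies that are k-good. -/

import Mathlib

open Finset Filter

noncomputable section

/-- A piece of the `n × n` puzzle, identified with its cell in the original grid. -/
abbrev Cell (n : ℕ) := Fin n × Fin n

/-- The unit vector in direction `d` (`0` = right, `1` = up, `2` = left, `3` = down). -/
def dirVec (d : ZMod 4) : ℤ × ℤ :=
  if d = 0 then (1, 0) else if d = 1 then (0, 1) else if d = 2 then (-1, 0) else (0, -1)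

/-- The integer coordinates of a cell. -/
def cellZ {n : ℕ} (c : Cell n) : ℤ × ℤ := ((c.1 : ℤ), (c.2 : ℤ))

/-- A carving assigns a jig type (one of `q` possibilities) to each of the four
(cyclically ordered) sides of each of the `n²` pieces. -/
abbrev Carving (n q : ℕ) := Cell n → ZMod 4 → Fin q

/-- A carving is valid if each pair of coincident sides of adjacent pieces of the
original grid receives complementary jig types (`ι` is the complementation involution). -/
def IsValidCarving {n q : ℕ} (ι : Fin q → Fin q) (ω : Carving n q) : Prop :=
  ∀ p p' : Cell n, ∀ d : ZMod 4,
    cellZ p' = cellZ p + dirVec d → ω p' (d + 2) = ι (ω p d)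

open scoped Classical in
/-- The probability of the event `P` for a carving chosen uniformly at random among
all valid carvings. -/
def puzzleProb {n q : ℕ} (ι : Fin q → Fin q) (P : Carving n q → Prop) : ℝ :=
  ((Finset.univ.filter fun ω : Carving n q => IsValidCarving ι ω ∧ P ω).card : ℝ) /
  ((Finset.univ.filter fun ω : Carving n q => IsValidCarving ι ω).card : ℝ)

/-- A complete assembly: a bijective placement of the pieces onto the cells of the
`n × n` grid together with an orientation (`ℤ/4`) for each piece. -/
structure Assembly (n : ℕ) where
  pos : Equiv.Perm (Cell n)
  rot : Cell n → ZMod 4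

/-- The planted assembly keeps every piece in its original position and orientation. -/
def planted (n : ℕ) : Assembly n := ⟨Equiv.refl _, fun _ => 0⟩

/-- A complete assembly is feasible for the carving `ω` if all pairs of abutting sides
carry complementary jig types.  The side of piece `p` facing direction `d` after `p` is
rotated by `A.rot p` quarter turns is its original side `d - A.rot p`. -/
def Assembly.Feasible {n q : ℕ} (ι : Fin q → Fin q) (A : Assembly n) (ω : Carving n q) :
    Prop :=
  ∀ p p' : Cell n, ∀ d : ZMod 4,
    cellZ (A.pos p') = cellZ (A.pos p) + dirVec d →
    ω p' (d + 2 - A.rot p') = ι (ω p (d - A.rot p))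

/-- The carving of the grid obtained by reassembling the pieces according to `A`:
side `d` of the grid cell `c` receives the jig type of the corresponding side of the
piece placed on `c`. -/
def Assembly.carving {n q : ℕ} (A : Assembly n) (ω : Carving n q) : Carving n q :=
  fun c d => ω (A.pos.symm c) (d - A.rot (A.pos.symm c))

/-- Rotation of the grid by 90 degrees. -/
def rotCell {n : ℕ} : Equiv.Perm (Cell n) where
  toFun c := (c.2.rev, c.1)
  invFun c := (c.2, c.1.rev)
  left_inv c := by simp
  right_inv c := by simp

/-- Global rotation of a carving of the grid by 90 degrees. -/
def rotateCarving {n q : ℕ} (ω : Carving n q) : Carving n q :=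
  fun c d => ω (rotCell.symm c) (d - 1)

/-- Two solutions are similar if they differ only by a global rotation of the puzzle,
a permutation of pieces with identical carvings, and rotations of pieces whose carving
is rotation-invariant; equivalently, if they induce the same carving of the grid up to
a global rotation. -/
def PuzzleSimilar {n q : ℕ} (A B : Assembly n) (ω : Carving n q) : Prop :=
  ∃ r : Fin 4, B.carving ω = rotateCarving^[r.val] (A.carving ω)

/-- The planted assembly rotated globally by `r` quarter turns. -/
def rotatedPlanted (n : ℕ) (r : Fin 4) : Assembly n :=
  ⟨rotCell ^ r.val, fun _ => (r.val : ZMod 4)⟩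

/-- The cell `c` belongs to the `k × k` window with lower-left corner `(a, b)`. -/
def inWindow {n : ℕ} (a b k : ℕ) (c : Cell n) : Prop :=
  a ≤ c.1.val ∧ c.1.val < a + k ∧ b ≤ c.2.val ∧ c.2.val < b + k

open scoped Classical in
/-- The number of dual edges of the `k × k` window at `(a, b)` (each dual edge recorded
once, as `(c, c', d)` with `d ∈ {right, up}`) whose abutting jig types, for the carving
induced by the assembly `A`, form the complementary pair `{j, ι j}`. -/
def windowTypeCount {n q : ℕ} (ι : Fin q → Fin q) (A : Assembly n) (ω : Carving n q)
    (a b k : ℕ) (j : Fin q) : ℕ :=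
  (Finset.univ.filter fun x : Cell n × Cell n × Fin 2 =>
    inWindow a b k x.1 ∧ inWindow a b k x.2.1 ∧
    cellZ x.2.1 = cellZ x.1 + dirVec (x.2.2.val : ZMod 4) ∧
    (A.carving ω x.1 (x.2.2.val : ZMod 4) = j ∨
      A.carving ω x.1 (x.2.2.val : ZMod 4) = ι j)).card

open scoped Classical in
/-- The shape multiplicity of the `k × k` window at `(a, b)`: the sum, over unordered
complementary pairs `J = {j, ι j}`, of `⌊(number of dual edges of the window of type J)/2⌋`. -/
def windowSM {n q : ℕ} (ι : Fin q → Fin q) (A : Assembly n) (ω : Carving n q)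
    (a b k : ℕ) : ℕ :=
  ∑ j ∈ Finset.univ.filter (fun j : Fin q => j ≤ ι j),
    windowTypeCount ι A ω a b k j / 2

/-- A feasible complete assembly is `k`-good if every `k × k` window touching the boundary
of the puzzle has shape multiplicity at most `1`, and every other `k × k` window has shape
multiplicity at most `2`. -/
def KGood {n q : ℕ} (ι : Fin q → Fin q) (A : Assembly n) (ω : Carving n q) (k : ℕ) :
    Prop :=
  A.Feasible ι ω ∧
    ∀ a b : ℕ, a + k ≤ n → b + k ≤ n →
      windowSM ι A ω a b k ≤ 2 ∧
      ((a = 0 ∨ b = 0 ∨ a + k = n ∨ b + k = n) → windowSM ι A ω a b k ≤ 1)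

/-- A partial assembly: an injective placement of a subset of the pieces into the square
grid `ℤ²`, together with an orientation for each placed piece. -/
structure PartialAssembly (n : ℕ) where
  pieces : Finset (Cell n)
  pos : Cell n → ℤ × ℤ
  rot : Cell n → ZMod 4
  pos_inj : ∀ p ∈ pieces, ∀ p' ∈ pieces, pos p = pos p' → p = p'

/-- A partial assembly is feasible for `ω` if all pairs of abutting sides carry
complementary jig types. -/
def PartialAssembly.Feasible {n q : ℕ} (ι : Fin q → Fin q) (A : PartialAssembly n)
    (ω : Carving n q) : Prop :=
  ∀ p ∈ A.pieces, ∀ p' ∈ A.pieces, ∀ d : ZMod 4,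
    A.pos p' = A.pos p + dirVec d →
    ω p' (d + 2 - A.rot p') = ι (ω p (d - A.rot p))

open scoped Classical in
/-- The edges of the contour graph `C(A)`: the dual edges of `A` (each recorded once, as
`(p, p', d)` with `d ∈ {right, up}`, `p'` being placed in direction `d` from `p`) whose two
abutting piece sides are not coincident in the planted assembly. -/
def contourEdges {n : ℕ} (A : PartialAssembly n) : Finset (Cell n × Cell n × Fin 2) :=
  Finset.univ.filter fun x =>
    x.1 ∈ A.pieces ∧ x.2.1 ∈ A.pieces ∧
    A.pos x.2.1 = A.pos x.1 + dirVec (x.2.2.val : ZMod 4) ∧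
    ¬ (A.rot x.2.1 = A.rot x.1 ∧
        cellZ x.2.1 = cellZ x.1 + dirVec ((x.2.2.val : ZMod 4) - A.rot x.1))

/-- The piece sides lying across the edges of the contour graph of `A`. -/
def crossingSides {n : ℕ} (A : PartialAssembly n) : Set (Cell n × ZMod 4) :=
  {ps | ∃ x ∈ contourEdges A,
    ps = (x.1, (x.2.2.val : ZMod 4) - A.rot x.1) ∨
    ps = (x.2.1, (x.2.2.val : ZMod 4) + 2 - A.rot x.2.1)}

/-- Two piece sides are coincident in the planted assembly. -/
def CoincidentPlanted {n : ℕ} (ps ps' : Cell n × ZMod 4) : Prop :=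
  cellZ ps'.1 = cellZ ps.1 + dirVec ps.2 ∧ ps'.2 = ps.2 + 2

open scoped Classical in
/-- The shape multiplicity `sm(C(A), ω)` of the contour graph of `A` with respect to `ω`:
the sum, over unordered complementary pairs `J = {j, ι j}`, of
`⌊(number of contour edges of type J)/2⌋`. -/
def contourSM {n q : ℕ} (ι : Fin q → Fin q) (A : PartialAssembly n) (ω : Carving n q) :
    ℕ :=
  ∑ j ∈ Finset.univ.filter (fun j : Fin q => j ≤ ι j),
    ((contourEdges A).filter fun x =>
      ω x.1 ((x.2.2.val : ZMod 4) - A.rot x.1) = j ∨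
      ω x.1 ((x.2.2.val : ZMod 4) - A.rot x.1) = ι j).card / 2

end

/-!
Feasibility and `k`-goodness of an assembly `A` depend only on the reassembled carving
`A.carving ω`, and the reassembled carvings of the valid carvings are the classes of an
equivalence relation. If the event fails at `ω`, the class of `ω` has at most four `k`-good
members (rotations of one another) and at least one member that is not `k`-good, so at most five
times as many carvings fail the event as carvings for which the planted assembly is not `k`-good.

A window of shape multiplicity `s` contains `s` disjoint pairs of dual edges of equal type.
Resampling the jig type of the second edge of a pair, with all other sides fixed, matches the
first one with probability at most `2 / q`, so `s` given pairs all match with probability at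
most `(2 / q) ^ s`, and a union bound over the at most `(2 k²) ^ (2 s)` choices of pairs gives
`(8 k⁴ / q) ^ s`. Summing this for `s = 3` over all `(n + 1)²` windows and for `s = 2` over the
`4 (n + 1)` boundary windows gives `O(k¹² / n + k⁸ / n)`, which tends to `0`.
-/

lemma card_le_mul_card_of_classes {α : Type*} [DecidableEq α] {X Y : Finset α}
    (r : α → Finset α) (C : ℕ) (hself : ∀ a ∈ X, a ∈ r a)
    (hclass : ∀ a ∈ X, ∀ b ∈ r a, r b = r a) (hY : ∀ a ∈ X, (r a).card ≤ C * (r a ∩ Y).card) :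
    X.card ≤ C * Y.card := by
  have hdisj : (↑(X.image r) : Set (Finset α)).PairwiseDisjoint (· ∩ Y) := by
    intro S₁ hS₁ S₂ hS₂ hne
    obtain ⟨a₁, ha₁, rfl⟩ := Finset.mem_image.1 hS₁
    obtain ⟨a₂, ha₂, rfl⟩ := Finset.mem_image.1 hS₂
    refine Finset.disjoint_left.2 fun b hb₁ hb₂ => hne ?_
    rw [← hclass a₁ ha₁ b (Finset.mem_inter.1 hb₁).1, hclass a₂ ha₂ b (Finset.mem_inter.1 hb₂).1]
  calc X.card = ∑ S ∈ X.image r, (X.filter fun a => r a = S).card :=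
        Finset.card_eq_sum_card_image r X
    _ ≤ ∑ S ∈ X.image r, C * (S ∩ Y).card := by
        refine Finset.sum_le_sum fun S hS => ?_
        obtain ⟨a, ha, rfl⟩ := Finset.mem_image.1 hS
        refine le_trans (Finset.card_le_card fun b hb => ?_) (hY a ha)
        obtain ⟨hbX, hb⟩ := Finset.mem_filter.1 hb
        exact hb ▸ hself b hbX
    _ = C * ((X.image r).biUnion (· ∩ Y)).card := by rw [Finset.card_biUnion hdisj, Finset.mul_sum]
    _ ≤ C * Y.card :=
        Nat.mul_le_mul_left C (Finset.card_le_card (Finset.biUnion_subset.2 fun _ _ =>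
          Finset.inter_subset_right))

lemma Function.Injective.sumElim_cons {β : Type*} {s : ℕ} {x y : β} {u v : Fin s → β}
    (h : Function.Injective (Sum.elim u v)) (hxy : x ≠ y) (hx : ∀ i, u i ≠ x ∧ v i ≠ x)
    (hy : ∀ i, u i ≠ y ∧ v i ≠ y) :
    Function.Injective (Sum.elim (Fin.cons x u : Fin (s + 1) → β) (Fin.cons y v)) := by
  have hu : Function.Injective u := h.comp Sum.inl_injective
  have hv : Function.Injective v := h.comp Sum.inr_injective
  have huv : ∀ i j, u i ≠ v j := fun i j hij => Sum.inl_ne_inr (h hij)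
  rintro (a | a) (b | b) hab <;> cases a using Fin.cases <;> cases b using Fin.cases <;>
    simp_all [hu.eq_iff, hv.eq_iff, eq_comm]

lemma sum_card_filter_insert_insert_div_two {β γ : Type*} [DecidableEq β] [DecidableEq γ]
    (f : β → γ) {J : Finset γ} {E : Finset β} {x y : β} (hxy : x ≠ y) (hx : x ∉ E) (hy : y ∉ E)
    (hf : f x = f y) (hJ : f x ∈ J) :
    ∑ j ∈ J, ((insert x (insert y E)).filter fun z => f z = j).card / 2 =
      ∑ j ∈ J, (E.filter fun z => f z = j).card / 2 + 1 := by
  have hfiber : ∀ j, ((insert x (insert y E)).filter fun z => f z = j).card / 2 =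
      (E.filter fun z => f z = j).card / 2 + if f x = j then 1 else 0 := by
    intro j
    rw [Finset.filter_insert, Finset.filter_insert, ← hf]
    split_ifs
    · rw [Finset.card_insert_of_notMem (by simp [hxy, hx]),
        Finset.card_insert_of_notMem (by simp [hy])]
      omega
    · rfl
  rw [Finset.sum_congr rfl fun j _ => hfiber j, Finset.sum_add_distrib,
    Finset.sum_ite_eq J (f x) (fun _ => 1), if_pos hJ]

lemma exists_disjoint_pairs_of_le_sum_card_div_two {β γ : Type*} [DecidableEq β] [DecidableEq γ]
    (f : β → γ) (J : Finset γ) :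
    ∀ (s : ℕ) (E : Finset β), s ≤ ∑ j ∈ J, (E.filter fun z => f z = j).card / 2 →
      ∃ u v : Fin s → β, (∀ i, u i ∈ E ∧ v i ∈ E ∧ f (u i) = f (v i)) ∧
        Function.Injective (Sum.elim u v)
  | 0, _, _ => ⟨Fin.elim0, Fin.elim0, fun i => i.elim0, by rintro (a | a) <;> exact a.elim0⟩
  | s + 1, E, hs => by
    obtain ⟨j₀, hj₀, hcard⟩ : ∃ j ∈ J, 1 < (E.filter fun z => f z = j).card := by
      by_contra! h
      have : ∀ j ∈ J, (E.filter fun z => f z = j).card / 2 = 0 := fun j hj =>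
        Nat.div_eq_of_lt (by linarith [h j hj])
      rw [Finset.sum_eq_zero this] at hs
      omega
    obtain ⟨x, hx, y, hy, hxy⟩ := Finset.one_lt_card.1 hcard
    obtain ⟨hxE, rfl⟩ := Finset.mem_filter.1 hx
    obtain ⟨hyE, hfy⟩ := Finset.mem_filter.1 hy
    set E' := (E.erase x).erase y
    have hE : E = insert x (insert y E') := by
      rw [Finset.insert_erase (Finset.mem_erase.2 ⟨hxy.symm, hyE⟩), Finset.insert_erase hxE]
    have hne : ∀ z ∈ E', z ≠ x ∧ z ≠ y := fun z hz =>
      ⟨(Finset.mem_erase.1 (Finset.mem_erase.1 hz).2).1, (Finset.mem_erase.1 hz).1⟩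
    rw [hE, sum_card_filter_insert_insert_div_two f hxy (fun h => (hne x h).1 rfl)
      (fun h => (hne y h).2 rfl) hfy.symm hj₀] at hs
    obtain ⟨u, v, hmem, hinj⟩ := exists_disjoint_pairs_of_le_sum_card_div_two f J s E' (by omega)
    refine ⟨Fin.cons x u, Fin.cons y v, fun i => ?_, hinj.sumElim_cons hxy
      (fun i => ⟨(hne _ (hmem i).1).1, (hne _ (hmem i).2.1).1⟩)
      (fun i => ⟨(hne _ (hmem i).1).2, (hne _ (hmem i).2.1).2⟩)⟩
    cases i using Fin.cases with
    | zero => exact ⟨hxE, hyE, hfy.symm⟩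
    | succ i =>
      obtain ⟨hu, hv, hf⟩ := hmem i
      exact ⟨hE ▸ by simp [hu], hE ▸ by simp [hv], hf⟩

variable {n q : ℕ}

lemma cellZ_injective : Function.Injective (cellZ (n := n)) := by
  rintro ⟨a₁, a₂⟩ ⟨b₁, b₂⟩ h
  simp only [cellZ, Prod.mk.injEq, Nat.cast_inj, Fin.val_inj] at h
  rw [h.1, h.2]

lemma dirVec_add_two (d : ZMod 4) : dirVec (d + 2) = -dirVec d := by revert d; decide

lemma fin_two_cast_zmod_four_injective : Function.Injective fun u : Fin 2 => (u.val : ZMod 4) := by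
  decide

lemma fin_two_cast_zmod_four_ne_add_two (u v : Fin 2) :
    (u.val : ZMod 4) ≠ (v.val : ZMod 4) + 2 := by
  revert u v; decide

namespace Assembly

variable {ι : Fin q → Fin q}

lemma feasible_iff_isValidCarving_carving {A : Assembly n} {ω : Carving n q} :
    A.Feasible ι ω ↔ IsValidCarving ι (A.carving ω) := by
  constructor
  · intro h c c' d hd
    simpa [Assembly.carving] using h (A.pos.symm c) (A.pos.symm c') d (by simpa using hd)
  · intro h p p' d hd
    simpa [Assembly.carving] using h (A.pos p) (A.pos p') d hd

def trans (A B : Assembly n) : Assembly n :=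
  ⟨A.pos.trans B.pos, fun p => A.rot p + B.rot (A.pos p)⟩

lemma trans_carving (A B : Assembly n) (ω : Carving n q) :
    (A.trans B).carving ω = B.carving (A.carving ω) := by
  funext c d
  simp only [Assembly.carving, trans, Equiv.symm_trans_apply, Equiv.apply_symm_apply]
  congr 1
  ring

def symm (A : Assembly n) : Assembly n :=
  ⟨A.pos.symm, fun c => -A.rot (A.pos.symm c)⟩

lemma symm_carving (A : Assembly n) (ω : Carving n q) : A.symm.carving (A.carving ω) = ω := by
  funext c d
  simp [Assembly.carving, symm]

end Assembly

lemma planted_carving (ω : Carving n q) : (planted n).carving ω = ω := by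
  funext c d
  simp [Assembly.carving, planted]

lemma windowSM_eq_windowSM_planted (ι : Fin q → Fin q) (A : Assembly n) (ω : Carving n q)
    (a b k : ℕ) : windowSM ι A ω a b k = windowSM ι (planted n) (A.carving ω) a b k := by
  unfold windowSM windowTypeCount
  rw [planted_carving]

lemma kGood_iff_kGood_planted {ι : Fin q → Fin q} {A : Assembly n} {ω : Carving n q} {k : ℕ} :
    KGood ι A ω k ↔ KGood ι (planted n) (A.carving ω) k := by
  simp only [KGood, Assembly.feasible_iff_isValidCarving_carving, planted_carving,
    windowSM_eq_windowSM_planted ι A ω]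

section Reassembly

variable {ι : Fin q → Fin q}

open scoped Classical in
noncomputable def reassemblies (ι : Fin q → Fin q) (ω : Carving n q) : Finset (Carving n q) :=
  univ.filter fun ω' => ∃ A : Assembly n, A.Feasible ι ω ∧ A.carving ω = ω'

lemma mem_reassemblies {ω ω' : Carving n q} :
    ω' ∈ reassemblies ι ω ↔ ∃ A : Assembly n, A.Feasible ι ω ∧ A.carving ω = ω' := by
  simp [reassemblies]

lemma isValidCarving_of_mem_reassemblies {ω ω' : Carving n q} (h : ω' ∈ reassemblies ι ω) :
    IsValidCarving ι ω' := by
  obtain ⟨A, hA, rfl⟩ := mem_reassemblies.1 h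
  exact Assembly.feasible_iff_isValidCarving_carving.1 hA

lemma self_mem_reassemblies {ω : Carving n q} (hω : IsValidCarving ι ω) :
    ω ∈ reassemblies ι ω :=
  mem_reassemblies.2 ⟨planted n, by
    rwa [Assembly.feasible_iff_isValidCarving_carving, planted_carving], planted_carving ω⟩

lemma reassemblies_subset_of_mem {ω ω' : Carving n q} (h : ω' ∈ reassemblies ι ω) :
    reassemblies ι ω' ⊆ reassemblies ι ω := by
  intro ω'' h'
  obtain ⟨A, -, rfl⟩ := mem_reassemblies.1 h
  obtain ⟨B, hB, rfl⟩ := mem_reassemblies.1 h'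
  refine mem_reassemblies.2 ⟨A.trans B, ?_, A.trans_carving B ω⟩
  rwa [Assembly.feasible_iff_isValidCarving_carving, Assembly.trans_carving,
    ← Assembly.feasible_iff_isValidCarving_carving]

lemma reassemblies_eq_of_mem {ω ω' : Carving n q} (hω : IsValidCarving ι ω)
    (h : ω' ∈ reassemblies ι ω) : reassemblies ι ω' = reassemblies ι ω := by
  refine (reassemblies_subset_of_mem h).antisymm (reassemblies_subset_of_mem ?_)
  obtain ⟨A, -, rfl⟩ := mem_reassemblies.1 h
  refine mem_reassemblies.2 ⟨A.symm, ?_, A.symm_carving ω⟩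
  rwa [Assembly.feasible_iff_isValidCarving_carving, Assembly.symm_carving]

end Reassembly

def AllSimilarOrTwoKGood (ι : Fin q → Fin q) (k : ℕ) (ω : Carving n q) : Prop :=
  (∀ A B : Assembly n, A.Feasible ι ω → B.Feasible ι ω → PuzzleSimilar A B ω) ∨
  (∃ A B : Assembly n, A.Feasible ι ω ∧ B.Feasible ι ω ∧
    KGood ι A ω k ∧ KGood ι B ω k ∧ ¬ PuzzleSimilar A B ω)

section Classes

variable {ι : Fin q → Fin q} {k : ℕ}

open scoped Classical

/-- Outside the event, the `k`-good members of a class are rotations of each other (at most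
four), while some member is not `k`-good. -/
lemma card_reassemblies_le {ω : Carving n q} (h : ¬ AllSimilarOrTwoKGood ι k ω) :
    (reassemblies ι ω).card ≤
      5 * ((reassemblies ι ω).filter fun ω' => ¬ KGood ι (planted n) ω' k).card := by
  simp only [AllSimilarOrTwoKGood, not_or, not_forall, not_exists, not_and, not_not] at h
  obtain ⟨⟨A, B, hA, hB, hAB⟩, hgood⟩ := h
  have hsimilar : ∀ ω₁ ∈ reassemblies ι ω, ∀ ω₂ ∈ reassemblies ι ω,
      KGood ι (planted n) ω₁ k → KGood ι (planted n) ω₂ k →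
        ∃ r : Fin 4, ω₂ = rotateCarving^[r.val] ω₁ := by
    intro ω₁ h₁ ω₂ h₂ g₁ g₂
    obtain ⟨A₁, hA₁, rfl⟩ := mem_reassemblies.1 h₁
    obtain ⟨A₂, hA₂, rfl⟩ := mem_reassemblies.1 h₂
    exact hgood A₁ A₂ hA₁ hA₂ (kGood_iff_kGood_planted.2 g₁) (kGood_iff_kGood_planted.2 g₂)
  have hbad : 1 ≤ ((reassemblies ι ω).filter fun ω' => ¬ KGood ι (planted n) ω' k).card := by
    have hA' := mem_reassemblies.2 ⟨A, hA, rfl⟩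
    have hB' := mem_reassemblies.2 ⟨B, hB, rfl⟩
    by_contra! h0
    simp only [Nat.lt_one_iff, Finset.card_eq_zero, Finset.filter_eq_empty_iff, not_not] at h0
    exact hAB (hsimilar _ hA' _ hB' (h0 hA') (h0 hB'))
  have hgood4 : ((reassemblies ι ω).filter fun ω' => KGood ι (planted n) ω' k).card ≤ 4 := by
    obtain he | ⟨δ, hδ⟩ := Finset.eq_empty_or_nonempty
      ((reassemblies ι ω).filter fun ω' => KGood ι (planted n) ω' k)
    · simp [he]
    obtain ⟨hδR, hδg⟩ := Finset.mem_filter.1 hδ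
    calc _ ≤ (univ.image fun r : Fin 4 => rotateCarving^[r.val] δ).card := by
          refine Finset.card_le_card fun ω' h' => ?_
          obtain ⟨r, hr⟩ := hsimilar δ hδR ω' (Finset.mem_filter.1 h').1 hδg
            (Finset.mem_filter.1 h').2
          exact Finset.mem_image.2 ⟨r, Finset.mem_univ r, hr.symm⟩
      _ ≤ 4 := Finset.card_image_le.trans (by simp)
  have hsplit := Finset.card_filter_add_card_filter_not (s := reassemblies ι ω)
    (p := fun ω' => KGood ι (planted n) ω' k)
  omega

lemma card_not_allSimilarOrTwoKGood_le (ι : Fin q → Fin q) (k : ℕ) :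
    (univ.filter fun ω : Carving n q => IsValidCarving ι ω ∧ ¬ AllSimilarOrTwoKGood ι k ω).card ≤
      5 * (univ.filter fun ω : Carving n q =>
        IsValidCarving ι ω ∧ ¬ KGood ι (planted n) ω k).card := by
  refine card_le_mul_card_of_classes (reassemblies ι) 5
    (fun ω hω => self_mem_reassemblies (Finset.mem_filter.1 hω).2.1)
    (fun ω hω _ h => reassemblies_eq_of_mem (Finset.mem_filter.1 hω).2.1 h)
    (fun ω hω => (card_reassemblies_le (Finset.mem_filter.1 hω).2.2).trans ?_)
  refine Nat.mul_le_mul_left 5 (Finset.card_le_card fun ω' h' => ?_)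
  obtain ⟨hR, hbad⟩ := Finset.mem_filter.1 h'
  exact Finset.mem_inter.2
    ⟨hR, Finset.mem_filter.2 ⟨Finset.mem_univ _, isValidCarving_of_mem_reassemblies hR, hbad⟩⟩

end Classes

section Resampling

variable {ι : Fin q → Fin q}

def IsDualEdge (x : Cell n × Cell n × Fin 2) : Prop :=
  cellZ x.2.1 = cellZ x.1 + dirVec (x.2.2.val : ZMod 4)

def side (x : Cell n × Cell n × Fin 2) : Cell n × ZMod 4 := (x.1, (x.2.2.val : ZMod 4))

def sideType (ω : Carving n q) (x : Cell n × Cell n × Fin 2) : Fin q := ω (side x).1 (side x).2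

def SameType (ι : Fin q → Fin q) (ω : Carving n q) (x y : Cell n × Cell n × Fin 2) : Prop :=
  sideType ω y = sideType ω x ∨ sideType ω y = ι (sideType ω x)

lemma eq_of_partner_eq {p p' c c' : Cell n} {d e : ZMod 4} (hp : cellZ p' = cellZ p + dirVec d)
    (hc : cellZ c' = cellZ c + dirVec e) (h : (p', d + 2) = (c', e + 2)) : (p, d) = (c, e) := by
  obtain ⟨rfl, hde⟩ := Prod.ext_iff.1 h
  obtain rfl : d = e := add_right_cancel hde
  rw [cellZ_injective (add_right_cancel (hp.symm.trans hc))]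

lemma side_injOn : Set.InjOn (side (n := n)) {x | IsDualEdge x} := by
  rintro ⟨c, c', d⟩ hx ⟨e, e', f⟩ hy h
  simp only [side, Prod.mk.injEq] at h
  obtain ⟨rfl, hdf⟩ := h
  obtain rfl := fin_two_cast_zmod_four_injective hdf
  have hx : IsDualEdge _ := hx
  have hy : IsDualEdge _ := hy
  obtain rfl : c' = e' := cellZ_injective (hx.trans hy.symm)
  rfl

def resample (ι : Fin q → Fin q) (ω : Carving n q) (x : Cell n × Cell n × Fin 2) (v : Fin q) :
    Carving n q := fun p d =>
  if (p, d) = side x then v else if (p, d) = (x.2.1, (x.2.2.val : ZMod 4) + 2) then ι v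
  else ω p d

lemma sideType_resample_self (ω : Carving n q) (x : Cell n × Cell n × Fin 2) (v : Fin q) :
    sideType (resample ι ω x v) x = v := by
  simp [sideType, resample]

lemma sideType_resample_of_ne (ω : Carving n q) {x w : Cell n × Cell n × Fin 2} (v : Fin q)
    (h : side w ≠ side x) : sideType (resample ι ω x v) w = sideType ω w := by
  -- edges are recorded in the directions right and up only, so no edge has the side
  -- `(x.2.1, x.2.2 + 2)` facing `x`
  have h2 := fin_two_cast_zmod_four_ne_add_two w.2.2 x.2.2
  simp only [sideType, resample, Prod.mk.eta]
  rw [if_neg h, if_neg fun h' => h2 (Prod.ext_iff.1 h').2]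

lemma resample_resample (ω : Carving n q) (x : Cell n × Cell n × Fin 2) (u v : Fin q) :
    resample ι (resample ι ω x u) x v = resample ι ω x v := by
  funext p d
  simp only [resample]
  split_ifs <;> rfl

lemma resample_sideType_self {ω : Carving n q} (hω : IsValidCarving ι ω)
    {x : Cell n × Cell n × Fin 2} (hx : IsDualEdge x) : resample ι ω x (sideType ω x) = ω := by
  funext p d
  simp only [resample, sideType, side, Prod.mk.injEq]
  split_ifs with h₁ h₂
  · rw [h₁.1, h₁.2]
  · rw [h₂.1, h₂.2, hω _ _ _ hx]
  · rfl

lemma isValidCarving_resample (hι : ι ∘ ι = id) {ω : Carving n q} (hω : IsValidCarving ι ω)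
    {x : Cell n × Cell n × Fin 2} (hx : IsDualEdge x) (v : Fin q) :
    IsValidCarving ι (resample ι ω x v) := by
  obtain ⟨c, c', e⟩ := x
  intro p p' d hd
  have he2 : ∀ f : ZMod 4, f + 2 ≠ f := by decide
  have he4 : ∀ f : ZMod 4, f + 2 + 2 = f := by decide
  have hx' : cellZ c = cellZ c' + dirVec ((e.val : ZMod 4) + 2) := by
    rw [hx, dirVec_add_two, add_neg_cancel_right]
  simp only [resample, side]
  by_cases h₁ : (p, d) = (c, (e.val : ZMod 4))
  · obtain ⟨rfl, rfl⟩ := Prod.mk.inj h₁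
    obtain rfl : p' = c' := cellZ_injective (hd.trans hx.symm)
    simp [he2]
  by_cases h₂ : (p, d) = (c', (e.val : ZMod 4) + 2)
  · obtain ⟨rfl, rfl⟩ := Prod.mk.inj h₂
    obtain rfl : p' = c := cellZ_injective (hd.trans hx'.symm)
    simp [he2, he4, show ι (ι v) = v from congrFun hι v]
  have h₁' : (p', d + 2) ≠ (c', (e.val : ZMod 4) + 2) := fun h => h₁ (eq_of_partner_eq hd hx h)
  have h₂' : (p', d + 2) ≠ (c, (e.val : ZMod 4)) := fun h =>
    h₂ (eq_of_partner_eq hd hx' (by rw [h, he4]))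
  simp only [h₁, h₂, h₁', h₂', if_false]
  exact hω p p' d hd

open scoped Classical in
/-- Of the `q` resamplings of `y`, at most two give `y` the type of `x`; `T` stands for an event
that does not see `y`. -/
lemma card_filter_sameType_le {x y : Cell n × Cell n × Fin 2}
    (hy : IsDualEdge y) (hxy : side x ≠ side y) {T : Finset (Carving n q)}
    (hvalid : ∀ ω ∈ T, IsValidCarving ι ω) (hT : ∀ ω ∈ T, ∀ v, resample ι ω y v ∈ T) :
    q * (T.filter fun ω => SameType ι ω x y).card ≤ 2 * T.card := by
  have key : ((T.filter fun ω => SameType ι ω x y) ×ˢ (univ : Finset (Fin q))).card ≤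
      (T ×ˢ (univ : Finset Bool)).card := by
    refine Finset.card_le_card_of_injOn
      (fun z => (resample ι z.1 y z.2, decide (sideType z.1 y = sideType z.1 x))) ?_ ?_
    · rintro ⟨ω, v⟩ h
      simp only [Finset.coe_product, Set.mem_prod, Finset.mem_coe, Finset.mem_filter] at h
      exact Finset.mem_coe.2 (Finset.mem_product.2 ⟨hT ω h.1.1 v, Finset.mem_univ _⟩)
    · rintro ⟨ω, v⟩ h ⟨ω', v'⟩ h' heq
      simp only [Finset.coe_product, Set.mem_prod, Finset.mem_coe, Finset.mem_filter] at h h'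
      simp only [Prod.mk.injEq] at heq ⊢
      obtain ⟨hres, hbit⟩ := heq
      have hv : v = v' := by
        rw [← sideType_resample_self (ι := ι) ω y v, hres, sideType_resample_self]
      have hx : sideType ω x = sideType ω' x := by
        rw [← sideType_resample_of_ne ω v hxy, hres, sideType_resample_of_ne ω' v' hxy]
      have hyy : sideType ω y = sideType ω' y := by
        rcases h.1.2 with h₁ | h₁ <;> rcases h'.1.2 with h₁' | h₁' <;>
          simp_all
      refine ⟨?_, hv⟩
      rw [← resample_sideType_self (hvalid ω h.1.1) hy, ← resample_resample ω y v, hres, hyy,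
        resample_resample, resample_sideType_self (hvalid ω' h'.1.1) hy]
  simpa [Finset.card_product, mul_comm] using key

lemma sameType_resample_iff (ω : Carving n q) {x y z : Cell n × Cell n × Fin 2} (v : Fin q)
    (hx : side x ≠ side z) (hy : side y ≠ side z) :
    SameType ι (resample ι ω z v) x y ↔ SameType ι ω x y := by
  rw [SameType, SameType, sideType_resample_of_ne ω v hx, sideType_resample_of_ne ω v hy]

open scoped Classical in
lemma card_forall_sameType_le (hι : ι ∘ ι = id) :
    ∀ {s : ℕ} (u v : Fin s → Cell n × Cell n × Fin 2), (∀ i, IsDualEdge (u i)) →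
      (∀ i, IsDualEdge (v i)) → Function.Injective (Sum.elim u v) →
      q ^ s * (univ.filter fun ω : Carving n q =>
          IsValidCarving ι ω ∧ ∀ i, SameType ι ω (u i) (v i)).card ≤
        2 ^ s * (univ.filter fun ω : Carving n q => IsValidCarving ι ω).card
  | 0, _, _, _, _, _ => by simp
  | s + 1, u, v, hu, hv, hinj => by
    have hside : Function.Injective (side ∘ Sum.elim u v) := by
      refine fun a b h => hinj (side_injOn ?_ ?_ h) <;> rcases a with a | a <;>
        rcases b with b | b <;> simp [hu, hv]
    set T := univ.filter fun ω : Carving n q =>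
      IsValidCarving ι ω ∧ ∀ i : Fin s, SameType ι ω (u i.succ) (v i.succ)
    have hT : q ^ s * T.card ≤
        2 ^ s * (univ.filter fun ω : Carving n q => IsValidCarving ι ω).card := by
      refine card_forall_sameType_le hι (u ∘ Fin.succ) (v ∘ Fin.succ) (fun i => hu _)
        (fun i => hv _) ?_
      rw [← Sum.elim_comp_map]
      exact hinj.comp ((Fin.succ_injective _).sumMap (Fin.succ_injective _))
    have hstep : q * (T.filter fun ω => SameType ι ω (u 0) (v 0)).card ≤ 2 * T.card := by
      refine card_filter_sameType_le (hv 0) (fun h => Sum.inl_ne_inr (hside h))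
        (fun ω hω => (Finset.mem_filter.1 hω).2.1) fun ω hω w => ?_
      obtain ⟨-, hω, hmatch⟩ := Finset.mem_filter.1 hω
      refine Finset.mem_filter.2 ⟨Finset.mem_univ _, isValidCarving_resample hι hω (hv 0) w,
        fun i => (sameType_resample_iff ω w ?_ ?_).2 (hmatch i)⟩
      · exact fun h => Sum.inl_ne_inr (hside h)
      · exact fun h => (Fin.succ_ne_zero i) (Sum.inr_injective (hside h))
    have hfilter : (univ.filter fun ω : Carving n q =>
        IsValidCarving ι ω ∧ ∀ i, SameType ι ω (u i) (v i)) =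
          T.filter fun ω => SameType ι ω (u 0) (v 0) := by
      ext ω
      simp only [T, Finset.mem_filter, Finset.mem_univ, true_and, Fin.forall_fin_succ]
      tauto
    rw [hfilter, pow_succ, pow_succ, mul_assoc]
    nlinarith [Nat.mul_le_mul_left (q ^ s) hstep]

end Resampling

section Windows

variable {ι : Fin q → Fin q}

open scoped Classical

noncomputable def windowEdges (n a b k : ℕ) : Finset (Cell n × Cell n × Fin 2) :=
  univ.filter fun x => inWindow a b k x.1 ∧ inWindow a b k x.2.1 ∧ IsDualEdge x

lemma card_windowEdges_le (a b k : ℕ) : (windowEdges n a b k).card ≤ 2 * k ^ 2 := by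
  calc (windowEdges n a b k).card ≤ ((range k ×ˢ range k) ×ˢ (univ : Finset (Fin 2))).card := by
        refine Finset.card_le_card_of_injOn (fun x => ((x.1.1.val - a, x.1.2.val - b), x.2.2))
          (fun x hx => ?_) (fun x hx x' hx' h => ?_)
        · obtain ⟨⟨h₁, h₂, h₃, h₄⟩, -⟩ := (Finset.mem_filter.1 hx).2
          simp only [Finset.coe_product, Set.mem_prod, Finset.mem_coe, Finset.mem_range]
          exact ⟨⟨by omega, by omega⟩, Finset.mem_univ _⟩
        · obtain ⟨⟨ha, -, hb, -⟩, -, hxd⟩ := (Finset.mem_filter.1 hx).2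
          obtain ⟨⟨ha', -, hb', -⟩, -, hxd'⟩ := (Finset.mem_filter.1 hx').2
          simp only [Prod.mk.injEq] at h
          refine side_injOn hxd hxd' ?_
          simp only [side, Prod.mk.injEq]
          exact ⟨Prod.ext (Fin.ext (by omega)) (Fin.ext (by omega)), by rw [h.2]⟩
    _ = 2 * k ^ 2 := by simp [Finset.card_product]; ring

def typeRep (ι : Fin q → Fin q) (j : Fin q) : Fin q := min j (ι j)

lemma typeRep_eq_iff (hι : ι ∘ ι = id) {j v : Fin q} (hj : j ≤ ι j) :
    typeRep ι v = j ↔ v = j ∨ v = ι j := by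
  have hιι : ∀ w, ι (ι w) = w := congrFun hι
  constructor
  · intro h
    rcases min_choice v (ι v) with h' | h' <;> rw [typeRep, h'] at h
    · exact Or.inl h
    · exact Or.inr (by rw [← h, hιι])
  · rintro (rfl | rfl)
    · exact min_eq_left hj
    · rw [typeRep, hιι]
      exact min_eq_right hj

lemma sameType_of_typeRep_eq (hι : ι ∘ ι = id) {ω : Carving n q} {x y : Cell n × Cell n × Fin 2}
    (h : typeRep ι (sideType ω x) = typeRep ι (sideType ω y)) : SameType ι ω x y := by
  have hιι : ∀ w, ι (ι w) = w := congrFun hι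
  unfold SameType
  rcases min_choice (sideType ω x) (ι (sideType ω x)) with hx | hx <;>
    rcases min_choice (sideType ω y) (ι (sideType ω y)) with hy | hy <;>
      rw [typeRep, typeRep, hx, hy] at h
  · exact Or.inl h.symm
  · exact Or.inr (by rw [h, hιι])
  · exact Or.inr h.symm
  · exact Or.inl (by rw [← hιι (sideType ω y), ← h, hιι])

lemma windowSM_planted_eq (hι : ι ∘ ι = id) (ω : Carving n q) (a b k : ℕ) :
    windowSM ι (planted n) ω a b k = ∑ j ∈ univ.filter (fun j : Fin q => j ≤ ι j),
      ((windowEdges n a b k).filter fun x => typeRep ι (sideType ω x) = j).card / 2 := by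
  unfold windowSM windowTypeCount windowEdges
  refine Finset.sum_congr rfl fun j hj => ?_
  rw [planted_carving, Finset.filter_filter]
  congr 2
  ext x
  simp only [Finset.mem_filter, Finset.mem_univ, true_and, IsDualEdge, sideType, side,
    typeRep_eq_iff hι (Finset.mem_filter.1 hj).2, and_assoc]

noncomputable def windowPairs (n a b k s : ℕ) :
    Finset ((Fin s → Cell n × Cell n × Fin 2) × (Fin s → Cell n × Cell n × Fin 2)) :=
  ((Fintype.piFinset fun _ => windowEdges n a b k) ×ˢ
    (Fintype.piFinset fun _ => windowEdges n a b k)).filter fun uv =>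
      Function.Injective (Sum.elim uv.1 uv.2)

lemma card_windowPairs_le (a b k s : ℕ) :
    (windowPairs n a b k s).card ≤ (2 * k ^ 2) ^ s * (2 * k ^ 2) ^ s := by
  refine (Finset.card_filter_le _ _).trans ?_
  simp only [Finset.card_product, Fintype.card_piFinset, Finset.prod_const, Finset.card_univ,
    Fintype.card_fin]
  exact Nat.mul_le_mul (Nat.pow_le_pow_left (card_windowEdges_le a b k) s)
    (Nat.pow_le_pow_left (card_windowEdges_le a b k) s)

lemma filter_le_windowSM_subset (hι : ι ∘ ι = id) (a b k s : ℕ) :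
    (univ.filter fun ω : Carving n q =>
        IsValidCarving ι ω ∧ s ≤ windowSM ι (planted n) ω a b k) ⊆
      (windowPairs n a b k s).biUnion fun uv => univ.filter fun ω : Carving n q =>
        IsValidCarving ι ω ∧ ∀ i, SameType ι ω (uv.1 i) (uv.2 i) := by
  intro ω hω
  obtain ⟨-, hω, hs⟩ := Finset.mem_filter.1 hω
  rw [windowSM_planted_eq hι] at hs
  obtain ⟨u, v, hmem, hinj⟩ := exists_disjoint_pairs_of_le_sum_card_div_two _ _ s _ hs
  refine Finset.mem_biUnion.2 ⟨(u, v), Finset.mem_filter.2 ⟨?_, hinj⟩, Finset.mem_filter.2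
    ⟨Finset.mem_univ _, hω, fun i => sameType_of_typeRep_eq hι (hmem i).2.2⟩⟩
  exact Finset.mem_product.2 ⟨Fintype.mem_piFinset.2 fun i => (hmem i).1,
    Fintype.mem_piFinset.2 fun i => (hmem i).2.1⟩

lemma card_le_windowSM_le (hι : ι ∘ ι = id) (a b k s : ℕ) :
    q ^ s * (univ.filter fun ω : Carving n q =>
        IsValidCarving ι ω ∧ s ≤ windowSM ι (planted n) ω a b k).card ≤
      (8 * k ^ 4) ^ s * (univ.filter fun ω : Carving n q => IsValidCarving ι ω).card := by
  set V := (univ.filter fun ω : Carving n q => IsValidCarving ι ω).card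
  have hpairs : ∀ uv ∈ windowPairs n a b k s, q ^ s * (univ.filter fun ω : Carving n q =>
      IsValidCarving ι ω ∧ ∀ i, SameType ι ω (uv.1 i) (uv.2 i)).card ≤ 2 ^ s * V := by
    rintro ⟨u, v⟩ huv
    obtain ⟨hP, hinj⟩ := Finset.mem_filter.1 huv
    obtain ⟨hu, hv⟩ := Finset.mem_product.1 hP
    have hdual : ∀ z ∈ windowEdges n a b k, IsDualEdge z := fun z hz =>
      (Finset.mem_filter.1 hz).2.2.2
    exact card_forall_sameType_le hι u v (fun i => hdual _ (Fintype.mem_piFinset.1 hu i))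
      (fun i => hdual _ (Fintype.mem_piFinset.1 hv i)) hinj
  calc _ ≤ ∑ uv ∈ windowPairs n a b k s, q ^ s * (univ.filter fun ω : Carving n q =>
          IsValidCarving ι ω ∧ ∀ i, SameType ι ω (uv.1 i) (uv.2 i)).card := by
        rw [← Finset.mul_sum]
        exact Nat.mul_le_mul_left _
          ((Finset.card_le_card (filter_le_windowSM_subset hι a b k s)).trans
            Finset.card_biUnion_le)
    _ ≤ (windowPairs n a b k s).card * (2 ^ s * V) := by
        rw [← smul_eq_mul, ← Finset.sum_const]
        exact Finset.sum_le_sum hpairs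
    _ ≤ (2 * k ^ 2) ^ s * (2 * k ^ 2) ^ s * (2 ^ s * V) :=
        Nat.mul_le_mul_right _ (card_windowPairs_le a b k s)
    _ = (8 * k ^ 4) ^ s * V := by
        rw [← mul_pow, ← mul_assoc, ← mul_pow]
        ring_nf

end Windows

noncomputable def windowBound (n k q : ℕ) : ℝ :=
  (n + 1) ^ 2 * (8 * k ^ 4 / q) ^ 3 + 4 * (n + 1) * (8 * k ^ 4 / q) ^ 2

section AllWindows

variable {ι : Fin q → Fin q}

open scoped Classical

def boundaryWindows (n k : ℕ) : Finset (ℕ × ℕ) :=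
  ({0, n - k} ×ˢ range (n + 1)) ∪ (range (n + 1) ×ˢ {0, n - k})

lemma card_boundaryWindows_le (n k : ℕ) : (boundaryWindows n k).card ≤ 4 * (n + 1) := by
  refine (Finset.card_union_le _ _).trans ?_
  simp only [Finset.card_product, Finset.card_range]
  have := Finset.card_le_two (a := 0) (b := n - k)
  nlinarith

lemma card_not_kGood_planted_le (ι : Fin q → Fin q) (k : ℕ) :
    (univ.filter fun ω : Carving n q => IsValidCarving ι ω ∧ ¬ KGood ι (planted n) ω k).card ≤
      ∑ ab ∈ range (n + 1) ×ˢ range (n + 1), (univ.filter fun ω : Carving n q =>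
        IsValidCarving ι ω ∧ 3 ≤ windowSM ι (planted n) ω ab.1 ab.2 k).card +
      ∑ ab ∈ boundaryWindows n k, (univ.filter fun ω : Carving n q =>
        IsValidCarving ι ω ∧ 2 ≤ windowSM ι (planted n) ω ab.1 ab.2 k).card := by
  refine le_trans (Finset.card_le_card fun ω hω => ?_) ((Finset.card_union_le _ _).trans
    (Nat.add_le_add Finset.card_biUnion_le Finset.card_biUnion_le))
  obtain ⟨-, hω, hbad⟩ := Finset.mem_filter.1 hω
  simp only [KGood, Assembly.feasible_iff_isValidCarving_carving, planted_carving, hω,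
    true_and, not_forall, not_and_or, not_le] at hbad
  obtain ⟨a, b, ha, hb, h3 | ⟨hboundary, h2⟩⟩ := hbad
  · refine Finset.mem_union_left _ (Finset.mem_biUnion.2 ⟨(a, b), ?_, ?_⟩)
    · simp only [Finset.mem_product, Finset.mem_range]
      omega
    · exact Finset.mem_filter.2 ⟨Finset.mem_univ _, hω, h3⟩
  · refine Finset.mem_union_right _ (Finset.mem_biUnion.2 ⟨(a, b), ?_, ?_⟩)
    · simp only [boundaryWindows, Finset.mem_union, Finset.mem_product, Finset.mem_insert,
        Finset.mem_singleton, Finset.mem_range]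
      omega
    · exact Finset.mem_filter.2 ⟨Finset.mem_univ _, hω, h2⟩

lemma card_le_windowSM_le_mul (hι : ι ∘ ι = id) (hq : 0 < q) (a b k s : ℕ) :
    ((univ.filter fun ω : Carving n q =>
        IsValidCarving ι ω ∧ s ≤ windowSM ι (planted n) ω a b k).card : ℝ) ≤
      (8 * k ^ 4 / q) ^ s * (univ.filter fun ω : Carving n q => IsValidCarving ι ω).card := by
  rw [div_pow, div_mul_eq_mul_div, le_div_iff₀ (by positivity), mul_comm]
  exact_mod_cast card_le_windowSM_le hι a b k s

lemma card_not_kGood_planted_le_mul (hι : ι ∘ ι = id) (hq : 0 < q) (k : ℕ) :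
    ((univ.filter fun ω : Carving n q =>
        IsValidCarving ι ω ∧ ¬ KGood ι (planted n) ω k).card : ℝ) ≤
      windowBound n k q * (univ.filter fun ω : Carving n q => IsValidCarving ι ω).card := by
  rw [windowBound]
  refine (Nat.cast_le.2 (card_not_kGood_planted_le ι k)).trans ?_
  push_cast
  refine (add_le_add (Finset.sum_le_sum fun ab _ => card_le_windowSM_le_mul hι hq ab.1 ab.2 k 3)
    (Finset.sum_le_sum fun ab _ => card_le_windowSM_le_mul hι hq ab.1 ab.2 k 2)).trans ?_
  rw [Finset.sum_const, Finset.sum_const, nsmul_eq_mul, nsmul_eq_mul, Finset.card_product,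
    Finset.card_range, add_mul]
  have hb : ((boundaryWindows n k).card : ℝ) ≤ 4 * (n + 1) := by
    exact_mod_cast card_boundaryWindows_le n k
  push_cast
  nlinarith [mul_le_mul_of_nonneg_right hb (by positivity :
    (0 : ℝ) ≤ (8 * k ^ 4 / q) ^ 2 * (univ.filter fun ω : Carving n q => IsValidCarving ι ω).card)]

end AllWindows

section Probability

variable {ι : Fin q → Fin q}

lemma exists_isValidCarving (hι : ι ∘ ι = id) (hq : 0 < q) :
    ∃ ω : Carving n q, IsValidCarving ι ω := by
  let j : Fin q := ⟨0, hq⟩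
  have hflip : ∀ d : ZMod 4, (d + 2).val < 2 ↔ ¬ d.val < 2 := by decide
  refine ⟨fun _ d => if d.val < 2 then j else ι j, fun p p' d _ => ?_⟩
  by_cases hd : d.val < 2
  · simp [hflip, hd]
  · simp [hflip, hd, show ι (ι j) = j from congrFun hι j]

open scoped Classical in
lemma puzzleProb_eq_one_sub (hι : ι ∘ ι = id) (hq : 0 < q) (P : Carving n q → Prop) :
    puzzleProb ι P = 1 - puzzleProb ι fun ω => ¬ P ω := by
  obtain ⟨ω, hω⟩ := exists_isValidCarving (n := n) hι hq
  have hV : (0 : ℝ) < (univ.filter fun ω : Carving n q => IsValidCarving ι ω).card := by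
    exact_mod_cast Finset.card_pos.2 ⟨ω, Finset.mem_filter.2 ⟨Finset.mem_univ _, hω⟩⟩
  have hsplit := Finset.card_filter_add_card_filter_not
    (s := univ.filter fun ω : Carving n q => IsValidCarving ι ω) (p := P)
  simp only [Finset.filter_filter] at hsplit
  rw [puzzleProb, puzzleProb, eq_sub_iff_add_eq, ← add_div, div_eq_one_iff_eq hV.ne']
  norm_cast
  convert hsplit

open scoped Classical in
lemma puzzleProb_not_allSimilarOrTwoKGood_le (hι : ι ∘ ι = id) (hq : 0 < q) (k : ℕ) :
    puzzleProb ι (fun ω : Carving n q => ¬ AllSimilarOrTwoKGood ι k ω) ≤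
      5 * windowBound n k q := by
  refine div_le_of_le_mul₀ (by positivity) (by rw [windowBound]; positivity) ?_
  beta_reduce
  calc _ ≤ (5 : ℝ) * (univ.filter fun ω : Carving n q =>
          IsValidCarving ι ω ∧ ¬ KGood ι (planted n) ω k).card := by
        norm_cast
        convert card_not_allSimilarOrTwoKGood_le (n := n) ι k using 3
    _ ≤ _ := by
        rw [mul_assoc]
        exact mul_le_mul_of_nonneg_left (card_not_kGood_planted_le_mul hι hq k) (by norm_num)

end Probability

lemma windowBound_le {c : ℝ} (hc : 0 < c) {n k q : ℕ} (hn : 1 ≤ n) (hq : c * n ≤ q) :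
    windowBound n k q ≤ 2048 / c ^ 3 * ((k : ℝ) / (n : ℝ) ^ ((1 : ℝ) / 12)) ^ 12 +
      512 / c ^ 2 * ((k : ℝ) / (n : ℝ) ^ ((1 : ℝ) / 12)) ^ 8 := by
  set m := (n : ℝ) ^ ((1 : ℝ) / 12)
  set x := (k : ℝ) / m
  have hm : 1 ≤ m := Real.one_le_rpow (by exact_mod_cast hn) (by norm_num)
  have hm0 : 0 < m := by linarith
  have hn12 : (n : ℝ) = m ^ 12 := by
    rw [← Real.rpow_natCast, ← Real.rpow_mul (Nat.cast_nonneg n)]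
    norm_num
  have hq0 : (0 : ℝ) < q := lt_of_lt_of_le (by positivity) hq
  have hr : 8 * (k : ℝ) ^ 4 / q ≤ 8 * x ^ 4 / (c * m ^ 8) := by
    calc 8 * (k : ℝ) ^ 4 / q ≤ 8 * (x * m) ^ 4 / (c * m ^ 12) := by
          rw [div_mul_cancel₀ _ hm0.ne', ← hn12]
          gcongr
      _ = 8 * x ^ 4 / (c * m ^ 8) := by field_simp
  have hn1 : (n : ℝ) + 1 ≤ 2 * m ^ 12 := by
    rw [← hn12]
    linarith [(Nat.one_le_cast (α := ℝ)).2 hn]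
  have h1 : ((n : ℝ) + 1) ^ 2 * (8 * (k : ℝ) ^ 4 / q) ^ 3 ≤ 2048 / c ^ 3 * x ^ 12 := by
    calc _ ≤ (2 * m ^ 12) ^ 2 * (8 * x ^ 4 / (c * m ^ 8)) ^ 3 := by gcongr
      _ = 2048 / c ^ 3 * x ^ 12 := by field_simp; ring
  have h2 : 4 * ((n : ℝ) + 1) * (8 * (k : ℝ) ^ 4 / q) ^ 2 ≤ 512 / c ^ 2 * x ^ 8 := by
    calc _ ≤ 4 * (2 * m ^ 12) * (8 * x ^ 4 / (c * m ^ 8)) ^ 2 := by gcongr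
      _ = 512 / c ^ 2 * x ^ 8 / m ^ 4 := by field_simp; ring
      _ ≤ 512 / c ^ 2 * x ^ 8 := div_le_self (by positivity) (one_le_pow₀ hm)
  rw [windowBound]
  linarith

lemma tendsto_windowBound {c : ℝ} (hc : 0 < c) {q k : ℕ → ℕ} (hq : ∀ n : ℕ, (c * n : ℝ) ≤ q n)
    (hko : Tendsto (fun n => (k n : ℝ) / (n : ℝ) ^ ((1 : ℝ) / 12)) atTop (nhds 0)) :
    Tendsto (fun n => windowBound n (k n) (q n)) atTop (nhds 0) := by
  refine squeeze_zero' (Eventually.of_forall fun n => by rw [windowBound]; positivity)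
    ((eventually_ge_atTop 1).mono fun n hn => windowBound_le hc hn (hq n)) ?_
  simpa using ((hko.pow 12).const_mul (2048 / c ^ 3)).add ((hko.pow 8).const_mul (512 / c ^ 2))

theorem statement_8_general (c : ℝ) (hc : 0 < c) (q : ℕ → ℕ) (ι : ∀ n, Fin (q n) → Fin (q n))
    (hι : ∀ n, ι n ∘ ι n = id)
    (hq : ∀ n : ℕ, (c * n : ℝ) ≤ q n)
    (k : ℕ → ℕ)
    (hko : Tendsto (fun n => (k n : ℝ) / (n : ℝ) ^ ((1 : ℝ) / 12)) atTop (nhds 0)) :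
    Tendsto (fun n =>
        puzzleProb (ι n) fun ω : Carving n (q n) =>
          (∀ A B : Assembly n,
              A.Feasible (ι n) ω → B.Feasible (ι n) ω → PuzzleSimilar A B ω) ∨
          (∃ A B : Assembly n,
              A.Feasible (ι n) ω ∧ B.Feasible (ι n) ω ∧
              KGood (ι n) A ω (k n) ∧ KGood (ι n) B ω (k n) ∧ ¬ PuzzleSimilar A B ω))
      atTop (nhds 1) := by
  have hqpos : ∀ᶠ n in atTop, 0 < q n := by
    filter_upwards [eventually_ge_atTop 1] with n hn
    have hn' : (0 : ℝ) < n := by exact_mod_cast hn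
    exact_mod_cast (mul_pos hc hn').trans_le (hq n)
  have hfail : Tendsto (fun n => puzzleProb (ι n) fun ω : Carving n (q n) =>
      ¬ AllSimilarOrTwoKGood (ι n) (k n) ω) atTop (nhds 0) := by
    refine squeeze_zero' (Eventually.of_forall fun n => by unfold puzzleProb; positivity)
      (hqpos.mono fun n hn => puzzleProb_not_allSimilarOrTwoKGood_le (hι n) hn (k n)) ?_
    simpa using (tendsto_windowBound hc hq hko).const_mul 5
  refine (by simpa using tendsto_const_nhds.sub hfail : Tendsto _ atTop (nhds (1 : ℝ))).congr' ?_
  filter_upwards [hqpos] with n hn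
  exact (puzzleProb_eq_one_sub (hι n) hn _).symm

/-- Let `c > 0` be fixed, `q = q(n) ≥ c·n`, and let `k = k(n)` be a
sequence of positive integers with `k = o(n^{1/12})`.  Then with probability tending to `1`
as `n → ∞`, a random `n × n` puzzle with `q` jig types satisfies: either all feasible
complete assemblies are similar, or there exist at least two non-similar feasible
complete assemblies that are `k`-good. -/
theorem statement_8 (c : ℝ) (hc : 0 < c) (q : ℕ → ℕ) (ι : ∀ n, Fin (q n) → Fin (q n))
    (hι : ∀ n, ι n ∘ ι n = id)
    (hq : ∀ n : ℕ, (c * n : ℝ) ≤ q n)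
    (k : ℕ → ℕ) (hkpos : ∀ n, 0 < k n)
    (hko : Tendsto (fun n => (k n : ℝ) / (n : ℝ) ^ ((1 : ℝ) / 12)) atTop (nhds 0)) :
    Tendsto (fun n =>
        puzzleProb (ι n) fun ω : Carving n (q n) =>
          (∀ A B : Assembly n,
              A.Feasible (ι n) ω → B.Feasible (ι n) ω → PuzzleSimilar A B ω) ∨
          (∃ A B : Assembly n,
              A.Feasible (ι n) ω ∧ B.Feasible (ι n) ω ∧
              KGood (ι n) A ω (k n) ∧ KGood (ι n) B ω (k n) ∧ ¬ PuzzleSimilar A B ω))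
      atTop (nhds 1) :=
  statement_8_general c hc q ι hι hq k hko
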